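/- For all n ≥ 0, the only word that is simultaneously a suffix of z_{n−1} and a prefix of z_n is the empty word. -/

import Mathlib

/-- The `m`-bonacci morphism `φ_m` on letters:
`φ_m(k) = 0·(k+1)` for `0 ≤ k ≤ m-2`, and `φ_m(m-1) = 0`. -/
def phiL (m a : ℕ) : List ℕ := if a = m - 1 then [0] else [0, a + 1]

/-- The `m`-bonacci morphism applied to a finite word. -/
def phiW (m : ℕ) (u : List ℕ) : List ℕ := u.flatMap (phiL m)

/-- The iterates `h n = φ_mⁿ(0)`. -/
def hword (m : ℕ) : ℕ → List ℕ
  | 0 => [0]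
  | n + 1 => phiW m (hword m n)

/-- The `m`-bonacci word, the infinite fixed point of `φ_m` beginning with `0`
(its `i`-th letter is the `i`-th letter of any sufficiently long iterate `φ_mⁿ(0)`). -/
def mbon (m : ℕ) : ℕ → ℕ := fun i => (hword m (i + 1)).getD i 0

/-- Auxiliary course-of-values construction for the p-singular words:
`zsAux m (k+1) i` gives the correct value of the (index-shifted) p-singular word
`z_{i-1}` for every `i ≤ k`. -/
def zsAux (m : ℕ) : ℕ → ℕ → List ℕ
  | 0, _ => []
  | k + 1, i =>
    if i < k then zsAux m k i
    else if i = 0 then []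
    else if i = 1 then [0]
    else if i ≤ m then
      -- here `i = n+1` with `1 ≤ n ≤ m-1`:
      -- `z_n = z_{n-2} z_{n-3} ⋯ z_1 z_0 · n · z_0 z_1 ⋯ z_{n-3} z_{n-2}`
      (((List.range (i - 2)).map (fun j => zsAux m k (i - 2 - j))).flatten)
        ++ [i - 1]
        ++ (((List.range (i - 2)).map (fun j => zsAux m k (1 + j))).flatten)
    else
      -- here `i = n+1` with `n ≥ m`:
      -- `z_n = z_{n-2} ⋯ z_{n-(m-1)} · z_{n-m} · z_{n-(m+1)} · z_{n-m} · z_{n-(m-1)} ⋯ z_{n-2}`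
      (((List.range (m - 2)).map (fun j => zsAux m k (i - 2 - j))).flatten)
        ++ zsAux m k (i - m) ++ zsAux m k (i - m - 1) ++ zsAux m k (i - m)
        ++ (((List.range (m - 2)).map (fun j => zsAux m k (i - m + 1 + j))).flatten)

/-- The (index-shifted) p-singular words for the `m`-bonacci word:
`zsw m 0 = z₋₁ = ε`, and `zsw m (n+1) = zₙ` for `n ≥ 0`, where
`z₀ = 0`, `zₙ = z_{n-2} z_{n-3} ⋯ z_1 z_0 · n · z_0 z_1 ⋯ z_{n-3} z_{n-2}` for `1 ≤ n ≤ m-1`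
(`n` denoting the single letter `n`), and
`zₙ = z_{n-2} z_{n-3} ⋯ z_{n-(m-1)} z_{n-m} z_{n-(m+1)} z_{n-m} z_{n-(m-1)} ⋯ z_{n-3} z_{n-2}`
for `n ≥ m`. -/
def zsw (m k : ℕ) : List ℕ := zsAux m (k + 1) k

/-!
Write `x_i = zsw m i` (so `x_i = z_{i-1}`). The p-singular words are, up to a letter `0`,
images of one another under `φ = φ_m`: `φ(x_i) 0 = x_{i+1}` for even `i` and `φ(x_i) = 0 x_{i+1}`
for odd `i`. This follows by strong induction, block by block, from the recursive definition
of `z_n`, since these padded relations compose along concatenations (`PhiShift`).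

Every image `φ(a)` starts with `0`, and `0` occurs nowhere else in it. Hence a nonempty suffix of
`x_{n+1}` that is a prefix of `x_{n+2}` desubstitutes to a nonempty suffix of `x_n` that is a
prefix of `x_{n+1}`; the first and last letters of the `x_i` (`0` or `1` according to parity)
rule out the misaligned cases. Since `x_0 = ε`, no such word exists.
-/

open List

section

variable {m : ℕ}

@[simp] lemma phiW_nil : phiW m [] = [] := rfl

@[simp] lemma phiW_cons (a : ℕ) (u : List ℕ) : phiW m (a :: u) = phiL m a ++ phiW m u := by
  simp [phiW]

@[simp] lemma phiW_append (u v : List ℕ) : phiW m (u ++ v) = phiW m u ++ phiW m v := by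
  simp [phiW]

lemma phiL_of_ne {a : ℕ} (h : a ≠ m - 1) : phiL m a = [0, a + 1] := if_neg h

@[simp] lemma phiL_pred : phiL m (m - 1) = [0] := if_pos rfl

lemma phiL_eq_cons (a : ℕ) : ∃ r, phiL m a = 0 :: r := by
  unfold phiL; split_ifs <;> exact ⟨_, rfl⟩

lemma phiW_append_zero_eq_cons (v : List ℕ) : ∃ r, phiW m v ++ [0] = 0 :: r := by
  cases v with
  | nil => exact ⟨[], rfl⟩
  | cons a v =>
    obtain ⟨r, hr⟩ := phiL_eq_cons (m := m) a
    exact ⟨r ++ phiW m v ++ [0], by simp [hr]⟩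

lemma not_succ_cons_prefix_phiW (c : ℕ) (x w : List ℕ) : ¬ (c + 1) :: x <+: phiW m w := by
  cases w with
  | nil => simp
  | cons b w =>
    obtain ⟨r, hr⟩ := phiL_eq_cons (m := m) b
    simp [hr]

lemma suffix_phiW {u v : List ℕ} (h : u <:+ phiW m v) :
    (∃ t, t <:+ v ∧ u = phiW m t) ∨ ∃ c t, c :: t <:+ v ∧ u = (c + 1) :: phiW m t := by
  induction v with
  | nil => exact .inl ⟨[], suffix_refl _, by simpa using h⟩
  | cons a v ih =>
    have of_suffix_tail (h' : u <:+ phiW m v) : (∃ t, t <:+ a :: v ∧ u = phiW m t) ∨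
        ∃ c t, c :: t <:+ a :: v ∧ u = (c + 1) :: phiW m t := (ih h').imp
      (fun ⟨t, ht, e⟩ => ⟨t, ht.trans (suffix_cons a v), e⟩)
      (fun ⟨c, t, ht, e⟩ => ⟨c, t, ht.trans (suffix_cons a v), e⟩)
    have whole (e : u = phiW m (a :: v)) : (∃ t, t <:+ a :: v ∧ u = phiW m t) ∨
        ∃ c t, c :: t <:+ a :: v ∧ u = (c + 1) :: phiW m t := .inl ⟨a :: v, suffix_refl _, e⟩
    rw [phiW_cons] at h whole
    by_cases ha : a = m - 1
    · rw [show phiL m a = [0] from ha ▸ phiL_pred] at h whole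
      rcases suffix_cons_iff.mp h with e | h'
      exacts [whole e, of_suffix_tail h']
    · rw [phiL_of_ne ha] at h whole
      rcases suffix_cons_iff.mp h with e | h'
      · exact whole e
      rcases suffix_cons_iff.mp h' with e | h'
      exacts [.inr ⟨a, v, suffix_refl _, e⟩, of_suffix_tail h']

lemma phiW_cons_prefix_phiW_cons {a b : ℕ} {t w : List ℕ}
    (h : phiW m (a :: t) <+: phiW m (b :: w)) :
    (a = m - 1 ∧ t = []) ∨ (a = b ∧ phiW m t <+: phiW m w) := by
  simp only [phiW_cons] at h
  by_cases ha : a = m - 1 <;> by_cases hb : b = m - 1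
  · rw [ha, hb, phiL_pred, singleton_append, singleton_append] at h
    exact .inr ⟨ha.trans hb.symm, (cons_prefix_cons.mp h).2⟩
  · rw [ha, phiL_pred, phiL_of_ne hb] at h
    cases t with
    | nil => exact .inl ⟨ha, rfl⟩
    | cons c t =>
      obtain ⟨r, hr⟩ := phiL_eq_cons (m := m) c
      simp [hr] at h
  · rw [hb, phiL_pred, phiL_of_ne ha] at h
    exact absurd (cons_prefix_cons.mp h).2 (not_succ_cons_prefix_phiW _ _ _)
  · rw [phiL_of_ne ha, phiL_of_ne hb] at h
    simp only [cons_append, cons_prefix_cons, Nat.add_right_cancel_iff, true_and] at h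
    exact .inr h

lemma prefix_or_eq_concat_of_phiW_prefix {t w : List ℕ} (h : phiW m t <+: phiW m w) :
    t <+: w ∨ ∃ t₀, t₀ <+: w ∧ t = t₀ ++ [m - 1] := by
  induction t generalizing w with
  | nil => exact .inl nil_prefix
  | cons a t ih =>
    cases w with
    | nil =>
      obtain ⟨r, hr⟩ := phiL_eq_cons (m := m) a
      simp [hr] at h
    | cons b w =>
      rcases phiW_cons_prefix_phiW_cons h with ⟨rfl, rfl⟩ | ⟨rfl, h'⟩
      · exact .inr ⟨[], nil_prefix, rfl⟩
      · exact (ih h').imp (fun ht => cons_prefix_cons.mpr ⟨rfl, ht⟩)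
          (fun ⟨t₀, ht₀, e⟩ => ⟨a :: t₀, cons_prefix_cons.mpr ⟨rfl, ht₀⟩, by simp [e]⟩)

lemma prefix_of_phiW_append_zero_prefix {x v : List ℕ} (h : phiW m x ++ [0] <+: phiW m v) :
    x <+: v := by
  have e : phiW m x ++ [0] = phiW m (x ++ [m - 1]) := by simp
  rcases prefix_or_eq_concat_of_phiW_prefix (e ▸ h) with h' | ⟨t₀, ht₀, e'⟩
  · exact (prefix_append x _).trans h'
  · exact append_inj_left' e' rfl ▸ ht₀

lemma prefix_or_eq_concat_of_phiW_prefix_append_zero {t v : List ℕ}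
    (h : phiW m t <+: phiW m v ++ [0]) : t <+: v ∨ ∃ t₀, t = t₀ ++ [m - 1] := by
  have e : phiW m v ++ [0] = phiW m (v ++ [m - 1]) := by simp
  rcases prefix_or_eq_concat_of_phiW_prefix (e ▸ h) with h' | ⟨t₀, -, e'⟩
  · exact (prefix_concat_iff.mp h').symm.imp_right (⟨v, ·⟩)
  · exact .inr ⟨t₀, e'⟩

lemma zsAux_eq_zsw {k i : ℕ} (h : i < k) : zsAux m k i = zsw m i := by
  induction k with
  | zero => omega
  | succ k ih =>
    rcases Nat.lt_or_ge i k with hk | hk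
    · rw [zsAux, if_pos hk, ih hk]
    · rw [show i = k by omega]; rfl

@[simp] lemma zsw_zero : zsw m 0 = [] := rfl

@[simp] lemma zsw_one : zsw m 1 = [0] := rfl

def zswCat (m : ℕ) (L : List ℕ) : List ℕ := (L.map (zsw m)).flatten

@[simp] lemma zswCat_nil : zswCat m [] = [] := rfl

@[simp] lemma zswCat_cons (i : ℕ) (L : List ℕ) : zswCat m (i :: L) = zsw m i ++ zswCat m L := rfl

@[simp] lemma zswCat_append (L L' : List ℕ) : zswCat m (L ++ L') = zswCat m L ++ zswCat m L' := by
  simp [zswCat]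

lemma flatten_map_zsAux_eq_zswCat {k b n : ℕ} {f : ℕ → ℕ} (h : ∀ j < n, f j < k ∧ f j = b + j) :
    ((range n).map fun j => zsAux m k (f j)).flatten = zswCat m (range' b n) := by
  rw [zswCat, range'_eq_map_range, map_map]
  congr 1
  refine map_congr_left fun j hj => ?_
  obtain ⟨hk, e⟩ := h j (mem_range.mp hj)
  rw [Function.comp_apply, zsAux_eq_zsw hk, e]

lemma flatten_map_zsAux_eq_zswCat_reverse {k b n : ℕ} {f : ℕ → ℕ}
    (h : ∀ j < n, f j < k ∧ f j = b + n - 1 - j) :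
    ((range n).map fun j => zsAux m k (f j)).flatten = zswCat m (range' b n).reverse := by
  rw [zswCat, reverse_range', map_map]
  congr 1
  refine map_congr_left fun j hj => ?_
  obtain ⟨hk, e⟩ := h j (mem_range.mp hj)
  rw [Function.comp_apply, zsAux_eq_zsw hk, e]

lemma zsw_add_two {k : ℕ} (hk : k + 2 ≤ m) :
    zsw m (k + 2) = zswCat m (range' 1 k).reverse ++ [k + 1] ++ zswCat m (range' 1 k) := by
  show zsAux m (k + 3) (k + 2) = _
  rw [zsAux, if_neg (by omega), if_neg (by omega), if_neg (by omega), if_pos hk,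
    show k + 2 - 2 = k by omega, show k + 2 - 1 = k + 1 by omega,
    flatten_map_zsAux_eq_zswCat_reverse (b := 1) fun j hj => ⟨by omega, by omega⟩,
    flatten_map_zsAux_eq_zswCat (b := 1) fun j hj => ⟨by omega, by omega⟩]

lemma zsw_add_add_one (hm : 0 < m) (k : ℕ) :
    zsw m (k + m + 1) = zswCat m (range' (k + 2) (m - 2)).reverse ++ zsw m (k + 1) ++ zsw m k
      ++ zsw m (k + 1) ++ zswCat m (range' (k + 2) (m - 2)) := by
  show zsAux m (k + m + 2) (k + m + 1) = _
  rw [zsAux, if_neg (by omega), if_neg (by omega), if_neg (by omega), if_neg (by omega),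
    show k + m + 1 - m = k + 1 by omega, show k + 1 - 1 = k by omega,
    flatten_map_zsAux_eq_zswCat_reverse (b := k + 2) fun j hj => ⟨by omega, by omega⟩,
    flatten_map_zsAux_eq_zswCat (b := k + 2) fun j hj => ⟨by omega, by omega⟩,
    zsAux_eq_zsw (by omega), zsAux_eq_zsw (by omega)]

lemma zsw_add_three {k : ℕ} (hk : k + 2 ≤ m) :
    zsw m (k + 3) = zswCat m (range' 2 k).reverse ++ (phiL m (k + 1) ++ [0]) ++
      zswCat m (range' 2 k) := by
  rcases hk.lt_or_eq with hk | rfl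
  · rw [zsw_add_two (k := k + 1) hk, phiL_of_ne (by omega), range'_succ]
    simp
  · have h := zsw_add_add_one (m := k + 2) (by omega) 0
    simp only [zero_add, Nat.add_sub_cancel] at h
    rw [show k + 3 = k + 2 + 1 by omega, h, show phiL (k + 2) (k + 1) = [0] from phiL_pred]
    simp

def oddPad (i : ℕ) : List ℕ := replicate (i % 2) 0

def PhiShift (m i j : ℕ) (w w' : List ℕ) : Prop := oddPad i ++ w' = phiW m w ++ oddPad j

lemma PhiShift.congr {i j i' j' : ℕ} {w w' : List ℕ} (h : PhiShift m i j w w')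
    (hi : i % 2 = i' % 2) (hj : j % 2 = j' % 2) : PhiShift m i' j' w w' := by
  rwa [PhiShift, oddPad, oddPad, ← hi, ← hj]

lemma PhiShift.append {i j j' k : ℕ} {w₁ w₁' w₂ w₂' : List ℕ} (h₁ : PhiShift m i j w₁ w₁')
    (h₂ : PhiShift m j' k w₂ w₂') (hj : j % 2 = j' % 2) :
    PhiShift m i k (w₁ ++ w₂) (w₁' ++ w₂') := by
  unfold PhiShift oddPad at *
  rw [hj] at h₁
  rw [phiW_append, ← append_assoc, h₁, append_assoc, h₂, append_assoc]

lemma phiShift_zswCat_range' {b l : ℕ}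
    (hz : ∀ j, b ≤ j → j < b + l → PhiShift m j (j + 1) (zsw m j) (zsw m (j + 1))) :
    PhiShift m b (b + l) (zswCat m (range' b l)) (zswCat m (range' (b + 1) l)) := by
  induction l generalizing b with
  | zero => simp [PhiShift]
  | succ l ih =>
    rw [range'_succ, range'_succ, zswCat_cons, zswCat_cons]
    exact (hz b le_rfl (by omega)).append (ih fun j h₁ h₂ => hz j (by omega) (by omega))
      rfl |>.congr rfl (by omega)

lemma phiShift_zswCat_range'_reverse {b l : ℕ}
    (hz : ∀ j, b ≤ j → j < b + l → PhiShift m j (j + 1) (zsw m j) (zsw m (j + 1))) :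
    PhiShift m (b + l + 1) (b + 1) (zswCat m (range' b l).reverse)
      (zswCat m (range' (b + 1) l).reverse) := by
  induction l generalizing b with
  | zero => simp [PhiShift]
  | succ l ih =>
    simp only [range'_succ, reverse_cons, zswCat_append, zswCat_cons, zswCat_nil, append_nil]
    exact (ih fun j h₁ h₂ => hz j (by omega) (by omega)).append (hz b le_rfl (by omega))
      (by omega) |>.congr (by omega) rfl

theorem phiShift_zsw (hm : 2 ≤ m) (i : ℕ) : PhiShift m i (i + 1) (zsw m i) (zsw m (i + 1)) := by
  induction i using Nat.strong_induction_on with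
  | _ i ih =>
  have hz {b l : ℕ} (hi : b + l ≤ i) (j : ℕ) (_ : b ≤ j) (hj : j < b + l) :
      PhiShift m j (j + 1) (zsw m j) (zsw m (j + 1)) := ih j (by omega)
  rcases i with _ | _ | k
  · rfl
  · show oddPad 1 ++ zsw m (0 + 2) = phiW m [0] ++ oddPad 2
    rw [zsw_add_two hm, phiW_cons, phiL_of_ne (by omega)]
    rfl
  rcases le_or_gt (k + 2) m with hk | hk
  · rw [zsw_add_two hk, zsw_add_three hk]
    have hD := phiShift_zswCat_range'_reverse (m := m) (b := 1) (l := k) (hz (by omega))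
    have hU := phiShift_zswCat_range' (m := m) (b := 1) (l := k) (hz (by omega))
    have hmid : PhiShift m 0 1 [k + 1] (phiL m (k + 1) ++ [0]) := by simp [PhiShift, oddPad]
    exact ((hD.append hmid (by omega)).append hU (by omega)).congr (by omega) (by omega)
  obtain ⟨k, rfl⟩ : ∃ j, k = j + (m - 1) := ⟨k + 1 - m, by omega⟩
  rw [show k + (m - 1) + 1 + 1 = k + m + 1 by omega, zsw_add_add_one (by omega),
    show k + m + 1 + 1 = k + 1 + m + 1 by omega, zsw_add_add_one (by omega)]
  have hD := phiShift_zswCat_range'_reverse (m := m) (b := k + 2) (l := m - 2) (hz (by omega))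
  have hU := phiShift_zswCat_range' (m := m) (b := k + 2) (l := m - 2) (hz (by omega))
  have h₁ := ih (k + 1) (by omega)
  have h₀ := ih k (by omega)
  exact ((((hD.append h₁ (by omega)).append h₀ (by omega)).append h₁ (by omega)).append hU
    (by omega)).congr (by omega) (by omega)

lemma zsw_two_mul_add_one (hm : 2 ≤ m) (k : ℕ) :
    zsw m (2 * k + 1) = phiW m (zsw m (2 * k)) ++ [0] := by
  simpa [PhiShift, oddPad] using phiShift_zsw hm (2 * k)

lemma cons_zero_zsw_two_mul_add_two (hm : 2 ≤ m) (k : ℕ) :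
    0 :: zsw m (2 * k + 2) = phiW m (zsw m (2 * k + 1)) := by
  simpa [PhiShift, oddPad, Nat.add_mod] using phiShift_zsw hm (2 * k + 1)

def TrivialOverlap (x y : List ℕ) : Prop := ∀ u, u <:+ x → u <+: y → u = []

lemma TrivialOverlap.image_of_append_zero (hm : 2 ≤ m) {x y z : List ℕ}
    (hy : y = phiW m x ++ [0]) (hz : 0 :: z = phiW m y) (h : TrivialOverlap x y) :
    TrivialOverlap y z := by
  intro u hu hpre
  by_contra hne
  obtain ⟨w, hw⟩ := phiW_append_zero_eq_cons (m := m) x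
  have hz₁ : z = 1 :: phiW m w := by
    simpa [hy, hw, phiL_of_ne (show 0 ≠ m - 1 by omega)] using hz
  rw [hy] at hu
  obtain ⟨ub, rfl, hub⟩ := (suffix_concat_iff.mp hu).resolve_left hne
  rcases suffix_phiW hub with ⟨t, -, rfl⟩ | ⟨c, t, ht, rfl⟩
  · obtain ⟨r, hr⟩ := phiW_append_zero_eq_cons (m := m) t
    simp [hr, hz₁] at hpre
  · obtain ⟨rfl, -⟩ : c = 0 ∧ _ := by simpa [hz₁] using hpre
    have hpre' : phiW m (0 :: t) ++ [0] <+: phiW m y := by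
      rw [← hz, phiW_cons, phiL_of_ne (show 0 ≠ m - 1 by omega)]
      simpa using hpre
    simpa using h _ ht (prefix_of_phiW_append_zero_prefix hpre')

lemma TrivialOverlap.image_of_cons_zero (hm : 2 ≤ m) {w x y z : List ℕ}
    (hx : x = w ++ [0]) (hy : 0 :: y = phiW m x) (hz : z = phiW m y ++ [0])
    (h : TrivialOverlap x y) : TrivialOverlap y z := by
  intro u hu hpre
  by_contra hne
  rw [hz] at hpre
  rcases suffix_phiW (hy ▸ hu.trans (suffix_cons 0 y)) with ⟨t, ht, rfl⟩ | ⟨c, t, -, rfl⟩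
  · rcases prefix_or_eq_concat_of_phiW_prefix_append_zero hpre with ht' | ⟨t₀, rfl⟩
    · exact hne (by rw [h t ht ht', phiW_nil])
    · rw [hx] at ht
      obtain ⟨t₁, e, -⟩ := (suffix_concat_iff.mp ht).resolve_left (by simp)
      have : m - 1 = 0 := by simpa using (append_inj' e rfl).2
      omega
  · obtain ⟨r, hr⟩ := phiW_append_zero_eq_cons (m := m) y
    simp [hr] at hpre

theorem trivialOverlap_zsw (hm : 2 ≤ m) (n : ℕ) : TrivialOverlap (zsw m n) (zsw m (n + 1)) := by
  induction n with
  | zero => exact fun u hu _ => suffix_nil.mp hu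
  | succ n ih =>
    obtain ⟨k, rfl | rfl⟩ := Nat.even_or_odd' n
    · exact ih.image_of_append_zero hm (zsw_two_mul_add_one hm k)
        (cons_zero_zsw_two_mul_add_two hm k)
    · exact ih.image_of_cons_zero hm (zsw_two_mul_add_one hm k)
        (cons_zero_zsw_two_mul_add_two hm k) (zsw_two_mul_add_one hm (k + 1))

end

/-- For all `n ≥ 0`, the only word that is simultaneously a suffix of `z_{n-1}` and a
prefix of `zₙ` is the empty word (recall `z_{n-1} = zsw m n` and `zₙ = zsw m (n+1)`). -/
theorem psingular_suffix_prefix (m : ℕ) (hm : 2 ≤ m) (n : ℕ) (u : List ℕ)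
    (hsuf : u <:+ zsw m n) (hpre : u <+: zsw m (n + 1)) :
    u = [] :=
  trivialOverlap_zsw hm n u hsuf hpre
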